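/- arXiv:1908.07024 — 4 statements merged into one kernel-verified Lean document; each statement's English description precedes it below -/
import Mathlib

section
/- Let m ≥ 3 and γ > 8m, and define S = [s_{jk}] ∈ M_m(ℂ) by s_{jk} = 2i/((j−k)γ + 2i). Then ‖S − I_m‖ < 1/4, and consequently S is positive definite. -/
open Matrix ComplexOrder

/-! Every off-diagonal entry of `S - 1` has modulus at most `2/γ`, since the real part of
its denominator is `(j - k)γ` with `|j - k| ≥ 1`; the Frobenius norm, which dominates the
operator norm, is therefore at most `2m/γ < 1/4`. Conjugating `s_{jk}` gives `s_{kj}`, so `S`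
is Hermitian, and for a Hermitian `A` with `‖A - 1‖ < 1` we have
`Re x* A x ≥ (1 - ‖A - 1‖)‖x‖² > 0`. -/

namespace Matrix

variable {𝕜 n : Type*} [RCLike 𝕜] [Fintype n] [DecidableEq n]

theorem norm_toEuclideanCLM_le_sqrt_sum_norm_sq (A : Matrix n n 𝕜) :
    ‖toEuclideanCLM (𝕜 := 𝕜) (n := n) A‖ ≤ √(∑ i, ∑ j, ‖A i j‖ ^ 2) := by
  refine ContinuousLinearMap.opNorm_le_bound _ (Real.sqrt_nonneg _) fun x => ?_
  rw [EuclideanSpace.norm_eq, EuclideanSpace.norm_eq, ← Real.sqrt_mul (by positivity),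
    Finset.sum_mul]
  refine Real.sqrt_le_sqrt (Finset.sum_le_sum fun i _ => ?_)
  calc ‖(A *ᵥ WithLp.ofLp x) i‖ ^ 2 ≤ (∑ j, ‖A i j‖ * ‖x j‖) ^ 2 := by
        gcongr
        simpa only [mulVec, dotProduct, norm_mul] using
          norm_sum_le Finset.univ fun j => A i j * x j
    _ ≤ (∑ j, ‖A i j‖ ^ 2) * ∑ j, ‖x j‖ ^ 2 := Finset.sum_mul_sq_le_sq_mul_sq _ _ _

theorem norm_toEuclideanCLM_le_card_mul {A : Matrix n n 𝕜} {c : ℝ} (hc : 0 ≤ c)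
    (hA : ∀ i j, ‖A i j‖ ≤ c) :
    ‖toEuclideanCLM (𝕜 := 𝕜) (n := n) A‖ ≤ Fintype.card n * c := by
  refine (norm_toEuclideanCLM_le_sqrt_sum_norm_sq A).trans
    (Real.sqrt_le_iff.mpr ⟨by positivity, ?_⟩)
  calc ∑ i, ∑ j, ‖A i j‖ ^ 2 ≤ ∑ _i : n, ∑ _j : n, c ^ 2 := by
        gcongr with i _ j _
        exact hA i j
    _ = (Fintype.card n * c) ^ 2 := by
        simp only [Finset.sum_const, Finset.card_univ, nsmul_eq_mul]
        ring

theorem IsHermitian.posDef_of_norm_toEuclideanCLM_sub_one_lt_one {A : Matrix n n 𝕜}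
    (hA : A.IsHermitian) (h : ‖toEuclideanCLM (𝕜 := 𝕜) (n := n) (A - 1)‖ < 1) : A.PosDef := by
  refine .of_dotProduct_mulVec_pos hA fun x hx =>
    RCLike.pos_iff.mpr ⟨?_, hA.im_star_dotProduct_mulVec_self x⟩
  set v : EuclideanSpace 𝕜 n := WithLp.toLp 2 x
  set T := toEuclideanCLM (𝕜 := 𝕜) (n := n) (A - 1)
  have hv : 0 < ‖v‖ := norm_pos_iff.mpr (by simpa [v] using hx)
  have hsplit : star x ⬝ᵥ (A *ᵥ x) = inner 𝕜 v v + inner 𝕜 v (T v) := by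
    have hA1 : x + (A - 1) *ᵥ x = A *ᵥ x := by rw [sub_mulVec, one_mulVec, add_sub_cancel]
    rw [dotProduct_comm, ← hA1, add_dotProduct]
    rfl
  have hTv : |RCLike.re (inner 𝕜 v (T v))| ≤ ‖T‖ * ‖v‖ ^ 2 :=
    calc |RCLike.re (inner 𝕜 v (T v))| ≤ ‖v‖ * ‖T v‖ :=
          (RCLike.abs_re_le_norm _).trans (norm_inner_le_norm _ _)
      _ ≤ ‖v‖ * (‖T‖ * ‖v‖) := by gcongr; exact T.le_opNorm v
      _ = ‖T‖ * ‖v‖ ^ 2 := by ring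
  rw [hsplit, map_add, inner_self_eq_norm_sq]
  nlinarith [abs_le.mp hTv, mul_lt_mul_of_pos_right h (pow_pos hv 2)]

end Matrix

namespace Complex

theorem norm_two_mul_I_div_ofReal_add_two_mul_I_le {x : ℝ} (hx : x ≠ 0) :
    ‖2 * I / (x + 2 * I)‖ ≤ 2 / |x| := by
  rw [norm_div, show ‖2 * I‖ = 2 by simp]
  gcongr
  simpa using abs_re_le_norm ((x : ℂ) + 2 * I)

theorem star_two_mul_I_div_ofReal_add_two_mul_I (x : ℝ) :
    star (2 * I / (x + 2 * I)) = 2 * I / ((-x : ℝ) + 2 * I) := by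
  have hconj : star ((x : ℂ) + 2 * I) = -((-x : ℝ) + 2 * I) := by
    apply Complex.ext <;> simp
  rw [star_div₀, hconj, div_neg, ← neg_div]
  simp

end Complex

open Complex

noncomputable def cauchyLikeMatrix (m : ℕ) (γ : ℝ) : Matrix (Fin m) (Fin m) ℂ :=
  of fun j k => 2 * I / ((((j : ℕ) - (k : ℕ) : ℝ) * γ : ℝ) + 2 * I)

theorem cauchyLikeMatrix_isHermitian (m : ℕ) (γ : ℝ) : (cauchyLikeMatrix m γ).IsHermitian := by
  ext j k
  simp only [conjTranspose_apply, cauchyLikeMatrix, of_apply,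
    star_two_mul_I_div_ofReal_add_two_mul_I]
  congr 3
  ring

theorem norm_cauchyLikeMatrix_sub_one_apply_le {m : ℕ} {γ : ℝ} (hγ : 0 < γ)
    (j k : Fin m) :
    ‖(cauchyLikeMatrix m γ - 1) j k‖ ≤ 2 / γ := by
  rcases eq_or_ne j k with rfl | hjk
  · simpa [cauchyLikeMatrix] using div_nonneg zero_le_two hγ.le
  have hjk' : (1 : ℝ) ≤ |((j : ℕ) - (k : ℕ) : ℝ)| := by
    have : (1 : ℤ) ≤ |((j : ℕ) - (k : ℕ) : ℤ)| :=
      Int.one_le_abs (sub_ne_zero.mpr (by exact_mod_cast Fin.val_ne_of_ne hjk))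
    exact_mod_cast this
  have hγ_le : γ ≤ |((j : ℕ) - (k : ℕ) : ℝ) * γ| := by
    rw [abs_mul, abs_of_pos hγ]; nlinarith
  rw [Matrix.sub_apply, one_apply_ne hjk, sub_zero]
  exact (norm_two_mul_I_div_ofReal_add_two_mul_I_le (abs_pos.mp (hγ.trans_le hγ_le))).trans
    (by gcongr)

theorem norm_toEuclideanCLM_cauchyLikeMatrix_sub_one_le {m : ℕ} {γ : ℝ} (hγ : 0 < γ) :
    ‖toEuclideanCLM (𝕜 := ℂ) (n := Fin m) (cauchyLikeMatrix m γ - 1)‖ ≤ 2 * m / γ := by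
  rw [← div_mul_eq_mul_div, mul_comm]
  simpa using norm_toEuclideanCLM_le_card_mul (by positivity)
    (norm_cauchyLikeMatrix_sub_one_apply_le (m := m) hγ)

theorem cauchy_like_matrix_posDef_general (m : ℕ) (γ : ℝ) (hγ : 8 * m < γ)
    (S : Matrix (Fin m) (Fin m) ℂ)
    (hS : ∀ j k : Fin m, S j k =
      (2 * Complex.I) / ((((j : ℕ) : ℂ) - ((k : ℕ) : ℂ)) * (γ : ℂ) + 2 * Complex.I)) :
    ‖Matrix.toEuclideanCLM (𝕜 := ℂ) (n := Fin m) (S - 1)‖ < 1 / 4 ∧ S.PosDef := by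
  have hγ0 : 0 < γ := lt_of_le_of_lt (by positivity) hγ
  obtain rfl : S = cauchyLikeMatrix m γ := by
    ext j k
    simp [hS, cauchyLikeMatrix]
  have hnorm := (norm_toEuclideanCLM_cauchyLikeMatrix_sub_one_le hγ0).trans_lt
    (show 2 * m / γ < 1 / 4 by rw [div_lt_iff₀ hγ0]; linarith)
  exact ⟨hnorm, (cauchyLikeMatrix_isHermitian m γ).posDef_of_norm_toEuclideanCLM_sub_one_lt_one
    (hnorm.trans (by norm_num))⟩

theorem cauchy_like_matrix_posDef (m : ℕ) (hm : 3 ≤ m) (γ : ℝ) (hγ : 8 * m < γ)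
    (S : Matrix (Fin m) (Fin m) ℂ)
    (hS : ∀ j k : Fin m, S j k =
      (2 * Complex.I) / ((((j : ℕ) : ℂ) - ((k : ℕ) : ℂ)) * (γ : ℂ) + 2 * Complex.I)) :
    ‖Matrix.toEuclideanCLM (𝕜 := ℂ) (n := Fin m) (S - 1)‖ < 1 / 4 ∧ S.PosDef :=
  cauchy_like_matrix_posDef_general m γ hγ S hS
end

section
/- For every integer m ≥ 1 there exist a normal matrix D ∈ M_{2m}(ℂ) and an orthogonal projection P ∈ M_{2m}(ℂ) of rank m such that rank((I−P)DP) = 1 and rank(PD(I−P)) = m. -/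
/-!
Take `P` to be the projection onto the first `n + 1` coordinates of `ℂ^(n+1) ⊕ ℂ^(n+1)` and
`D = [[A, B], [C, Aᵀ]]` real with `B = diag β`, `C = diag γ`. Then `(1 - P) D P` and
`P D (1 - P)` are just the blocks `C` and `B`, and `D` is normal as soon as
`A Aᵀ + B² = Aᵀ A + C²` and `A C + B A` is symmetric.

For `A = S + √2 Sᵀ` with `S` the weighted shift `e_k ↦ w_k e_(k+1)`, the commutator
`A Aᵀ - Aᵀ A = Sᵀ S - S Sᵀ` is diagonal, and the symmetry of `A C + B A` is the recursion
`γ_k + β_(k+1) = √2 (γ_(k+1) + β_k)`. With `γ` supported at `0` it is solved by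
`β_k = √2^(k-1)` for `k ≥ 1`, and the diagonal equation telescopes to `w_k² = 2^n - 2^k`;
it then holds at `k = 0` for `β_0 = √2 + √2^n`, `γ_0 = √2^(n+1) + 1`. So `C` has rank one
while `B` is invertible.
-/

open Matrix

namespace Matrix

section Blocks

variable {α ι : Type*} [Fintype ι] [DecidableEq ι]

omit [Fintype ι] in
theorem one_sub_fromBlocks_one_zero [Ring α] :
    1 - fromBlocks (1 : Matrix ι ι α) 0 0 (0 : Matrix ι ι α) = fromBlocks 0 0 0 1 := by
  rw [← fromBlocks_one, sub_eq_iff_eq_add, fromBlocks_add]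
  simp

theorem one_sub_fromBlocks_one_zero_mul_fromBlocks_mul [Ring α] (A B C D : Matrix ι ι α) :
    (1 - fromBlocks 1 0 0 0) * fromBlocks A B C D * fromBlocks 1 0 0 0 = fromBlocks 0 0 C 0 := by
  simp [one_sub_fromBlocks_one_zero, fromBlocks_multiply]

theorem fromBlocks_one_zero_mul_fromBlocks_mul_one_sub [Ring α] (A B C D : Matrix ι ι α) :
    fromBlocks 1 0 0 0 * fromBlocks A B C D * (1 - fromBlocks 1 0 0 0) = fromBlocks 0 B 0 0 := by
  simp [one_sub_fromBlocks_one_zero, fromBlocks_multiply]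

variable {K : Type*} [Field K] [DecidableEq K]

theorem rank_fromBlocks_diagonal_zero (d : ι → K) :
    (fromBlocks (diagonal d) 0 0 (0 : Matrix ι ι K)).rank = Fintype.card {i // d i ≠ 0} := by
  have h : fromBlocks (diagonal d) 0 0 (0 : Matrix ι ι K) = diagonal (Sum.elim d 0) := by
    simp [← fromBlocks_diagonal]
  rw [h, rank_diagonal, Fintype.card_congr Equiv.subtypeSum, Fintype.card_sum]
  simp only [Sum.elim_inl, Sum.elim_inr, Pi.zero_apply, ne_eq, not_true_eq_false,
    Fintype.card_eq_zero, add_zero]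
  exact Fintype.card_congr (Equiv.refl _)

theorem rank_fromBlocks_zero_diagonal_zero_zero (d : ι → K) :
    (fromBlocks 0 (diagonal d) 0 0 : Matrix (ι ⊕ ι) (ι ⊕ ι) K).rank =
      Fintype.card {i // d i ≠ 0} := by
  rw [← rank_fromBlocks_diagonal_zero,
    ← rank_submatrix _ (Equiv.refl (ι ⊕ ι)) (Equiv.sumComm ι ι)]
  congr 1
  ext (i | i) (j | j) <;> simp

theorem rank_fromBlocks_zero_zero_diagonal_zero (d : ι → K) :
    (fromBlocks 0 0 (diagonal d) 0 : Matrix (ι ⊕ ι) (ι ⊕ ι) K).rank =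
      Fintype.card {i // d i ≠ 0} := by
  rw [← rank_fromBlocks_diagonal_zero,
    ← rank_submatrix _ (Equiv.sumComm ι ι) (Equiv.refl (ι ⊕ ι))]
  congr 1
  ext (i | i) (j | j) <;> simp

end Blocks

section Normal

variable {R n : Type*} [CommRing R] [Fintype n]

theorem fromBlocks_mul_transpose_comm {A B C : Matrix n n R} (hB : B.IsSymm) (hC : C.IsSymm)
    (h₁ : A * Aᵀ + B * B = Aᵀ * A + C * C) (h₂ : (A * C + B * A).IsSymm) :
    fromBlocks A B C Aᵀ * (fromBlocks A B C Aᵀ)ᵀ =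
      (fromBlocks A B C Aᵀ)ᵀ * fromBlocks A B C Aᵀ := by
  have h₂' : C * Aᵀ + Aᵀ * B = A * C + B * A := by
    simpa [IsSymm, transpose_mul, hB.eq, hC.eq] using h₂
  rw [fromBlocks_transpose, hB.eq, hC.eq, transpose_transpose, fromBlocks_multiply,
    fromBlocks_multiply, h₁, h₂']
  congr 1
  · rw [← h₂', add_comm]
  · exact add_comm _ _
  · rw [add_comm, ← h₁, add_comm]

theorem add_smul_transpose_commutator (S : Matrix n n R) (a : R) :
    (S + a • Sᵀ) * (S + a • Sᵀ)ᵀ + (a ^ 2 - 1) • (S * Sᵀ) =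
      (S + a • Sᵀ)ᵀ * (S + a • Sᵀ) + (a ^ 2 - 1) • (Sᵀ * S) := by
  simp only [transpose_add, transpose_smul, transpose_transpose, add_mul, mul_add,
    smul_mul_assoc, mul_smul_comm]
  module

theorem map_ofReal_mul_conjTranspose_comm {M : Matrix n n ℝ} (h : M * Mᵀ = Mᵀ * M) :
    M.map Complex.ofRealHom * (M.map Complex.ofRealHom)ᴴ =
      (M.map Complex.ofRealHom)ᴴ * M.map Complex.ofRealHom := by
  rw [← conjTranspose_map (⇑Complex.ofRealHom) fun x => (Complex.conj_ofReal x).symm,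
    conjTranspose_eq_transpose_of_trivial, ← Matrix.map_mul, ← Matrix.map_mul, h]

end Normal

section WeightedShift

variable {R : Type*} [CommRing R]

def weightedShift (m : ℕ) (w : ℕ → R) : Matrix (Fin m) (Fin m) R :=
  of fun i j => if (i : ℕ) = j + 1 then w j else 0

variable {m : ℕ} (w : ℕ → R)

theorem weightedShift_mul_transpose :
    weightedShift m w * (weightedShift m w)ᵀ =
      diagonal fun i : Fin m => if (i : ℕ) = 0 then 0 else w (i - 1) ^ 2 := by
  ext ⟨i, hi⟩ ⟨j, hj⟩
  simp only [mul_apply, weightedShift, transpose_apply, of_apply, diagonal_apply,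
    ite_zero_mul_ite_zero, Fin.mk.injEq]
  rw [Fin.sum_univ_eq_sum_range (fun k => if i = k + 1 ∧ j = k + 1 then w k * w k else 0)]
  rcases eq_or_ne i j with rfl | hij
  · rcases i with _ | i
    · simp
    · simp [Finset.sum_ite_eq, pow_two, show i < m by omega]
  · simp only [if_neg hij]
    exact Finset.sum_eq_zero fun k _ => if_neg (by omega)

theorem transpose_mul_weightedShift :
    (weightedShift m w)ᵀ * weightedShift m w =
      diagonal fun j : Fin m => if (j : ℕ) + 1 < m then w j ^ 2 else 0 := by
  ext ⟨i, hi⟩ ⟨j, hj⟩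
  simp only [mul_apply, weightedShift, transpose_apply, of_apply, diagonal_apply,
    ite_zero_mul_ite_zero, Fin.mk.injEq]
  rw [Fin.sum_univ_eq_sum_range (fun k => if k = i + 1 ∧ k = j + 1 then w i * w j else 0)]
  rcases eq_or_ne i j with rfl | hij
  · simp [Finset.sum_ite_eq', pow_two]
  · simp only [if_neg hij]
    exact Finset.sum_eq_zero fun k _ => if_neg (by omega)

theorem isSymm_weightedShift_add_smul_transpose_mul_diagonal {a : R} {β γ : ℕ → R}
    (h : ∀ k, γ k + β (k + 1) = a * (γ (k + 1) + β k)) :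
    ((weightedShift m w + a • (weightedShift m w)ᵀ) * diagonal (fun i : Fin m => γ i) +
      diagonal (fun i : Fin m => β i) *
        (weightedShift m w + a • (weightedShift m w)ᵀ)).IsSymm := by
  refine IsSymm.ext fun ⟨i, hi⟩ ⟨j, hj⟩ => ?_
  simp only [add_apply, mul_diagonal, diagonal_mul, smul_apply, transpose_apply, weightedShift,
    of_apply, smul_eq_mul]
  by_cases hij : i = j + 1
  · subst hij
    simp only [if_true, show j ≠ j + 1 + 1 by omega, if_false]
    linear_combination -w j * h j
  by_cases hji : j = i + 1
  · subst hji
    simp only [if_true, show i ≠ i + 1 + 1 by omega, if_false]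
    linear_combination w i * h i
  · simp [hij, hji]

end WeightedShift

end Matrix

namespace NormalCorners

noncomputable def upperWeight (n k : ℕ) : ℝ := if k = 0 then √2 + √2 ^ n else √2 ^ (k - 1)

noncomputable def lowerWeight (n : ℕ) : ℕ → ℝ := Pi.single 0 (√2 ^ (n + 1) + 1)

noncomputable def shiftWeight (n k : ℕ) : ℝ := √(2 ^ n - 2 ^ k)

theorem upperWeight_zero (n : ℕ) : upperWeight n 0 = √2 + √2 ^ n := if_pos rfl

theorem upperWeight_succ (n k : ℕ) : upperWeight n (k + 1) = √2 ^ k := if_neg k.succ_ne_zero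

theorem lowerWeight_zero (n : ℕ) : lowerWeight n 0 = √2 ^ (n + 1) + 1 := Pi.single_eq_same _ _

theorem lowerWeight_succ (n k : ℕ) : lowerWeight n (k + 1) = 0 :=
  Pi.single_eq_of_ne k.succ_ne_zero _

theorem sq_sqrt_two_pow (k : ℕ) : (√2 ^ k) ^ 2 = 2 ^ k := by
  rw [← pow_mul, mul_comm, pow_mul, Real.sq_sqrt zero_le_two]

theorem shiftWeight_sq {n k : ℕ} (hk : k ≤ n) : shiftWeight n k ^ 2 = 2 ^ n - 2 ^ k :=
  Real.sq_sqrt (sub_nonneg.2 (pow_le_pow_right₀ one_le_two hk))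

theorem upperWeight_pos (n k : ℕ) : 0 < upperWeight n k := by
  rcases k with _ | k
  · rw [upperWeight_zero]; positivity
  · rw [upperWeight_succ]; positivity

theorem lowerWeight_ne_zero_iff {n k : ℕ} : lowerWeight n k ≠ 0 ↔ k = 0 := by
  rcases k with _ | k
  · simp only [lowerWeight_zero, ne_eq, iff_true]
    positivity
  · simp [lowerWeight_succ]

theorem lowerWeight_add_upperWeight_succ (n k : ℕ) :
    lowerWeight n k + upperWeight n (k + 1) = √2 * (lowerWeight n (k + 1) + upperWeight n k) := by
  rcases k with _ | k
  · rw [lowerWeight_zero, upperWeight_succ, lowerWeight_succ, upperWeight_zero]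
    linear_combination -Real.sq_sqrt zero_le_two
  · rw [lowerWeight_succ, upperWeight_succ, lowerWeight_succ, upperWeight_succ]
    ring

theorem upperWeight_sq_add_shiftWeight_sq {n k : ℕ} (hk : k ≤ n) :
    upperWeight n k ^ 2 + (if k < n then shiftWeight n k ^ 2 else 0) =
      lowerWeight n k ^ 2 + (if k = 0 then 0 else shiftWeight n (k - 1) ^ 2) := by
  have hsq : (if k < n then shiftWeight n k ^ 2 else 0) = 2 ^ n - 2 ^ k := by
    split_ifs with h
    · exact shiftWeight_sq hk
    · rw [show k = n by omega, sub_self]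
  rw [hsq]
  rcases k with _ | k
  · rw [upperWeight_zero, lowerWeight_zero, if_pos rfl]
    linear_combination (1 - (√2 ^ n) ^ 2) * Real.sq_sqrt zero_le_two - sq_sqrt_two_pow n
  · rw [upperWeight_succ, lowerWeight_succ, if_neg k.succ_ne_zero, Nat.add_sub_cancel,
      shiftWeight_sq (by omega), sq_sqrt_two_pow]
    ring

noncomputable def shiftBlock (n : ℕ) : Matrix (Fin (n + 1)) (Fin (n + 1)) ℝ :=
  weightedShift (n + 1) (shiftWeight n) + √2 • (weightedShift (n + 1) (shiftWeight n))ᵀ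

noncomputable def realModel (n : ℕ) :
    Matrix (Fin (n + 1) ⊕ Fin (n + 1)) (Fin (n + 1) ⊕ Fin (n + 1)) ℝ :=
  fromBlocks (shiftBlock n) (diagonal fun i => upperWeight n i)
    (diagonal fun i => lowerWeight n i) (shiftBlock n)ᵀ

theorem realModel_mul_transpose_comm (n : ℕ) :
    realModel n * (realModel n)ᵀ = (realModel n)ᵀ * realModel n := by
  set S := weightedShift (n + 1) (shiftWeight n)
  set A := shiftBlock n
  set B : Matrix (Fin (n + 1)) (Fin (n + 1)) ℝ := diagonal fun i => upperWeight n i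
  set C : Matrix (Fin (n + 1)) (Fin (n + 1)) ℝ := diagonal fun i => lowerWeight n i
  have hA : A * Aᵀ + S * Sᵀ = Aᵀ * A + Sᵀ * S := by
    have h := add_smul_transpose_commutator S √2
    rwa [Real.sq_sqrt zero_le_two, show (2 : ℝ) - 1 = 1 by norm_num, one_smul, one_smul] at h
  have hBC : B * B + Sᵀ * S = C * C + S * Sᵀ := by
    simp only [B, C, S, transpose_mul_weightedShift, weightedShift_mul_transpose,
      diagonal_mul_diagonal, diagonal_add]
    congr 1
    funext i
    simpa [pow_two] using upperWeight_sq_add_shiftWeight_sq (Nat.lt_succ_iff.1 i.2)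
  refine fromBlocks_mul_transpose_comm (isSymm_diagonal _) (isSymm_diagonal _) ?_
    (isSymm_weightedShift_add_smul_transpose_mul_diagonal _
      (lowerWeight_add_upperWeight_succ n))
  calc A * Aᵀ + B * B
        = (A * Aᵀ + S * Sᵀ) + (B * B + Sᵀ * S) - (S * Sᵀ + Sᵀ * S) := by abel
    _ = (Aᵀ * A + Sᵀ * S) + (C * C + S * Sᵀ) - (S * Sᵀ + Sᵀ * S) := by rw [hA, hBC]
    _ = Aᵀ * A + C * C := by abel

theorem exists_normal_incompatible_corners_sum (n : ℕ) :
    ∃ D P : Matrix (Fin (n + 1) ⊕ Fin (n + 1)) (Fin (n + 1) ⊕ Fin (n + 1)) ℂ,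
      D * Dᴴ = Dᴴ * D ∧ P * P = P ∧ Pᴴ = P ∧ P.rank = n + 1 ∧
        ((1 - P) * D * P).rank = 1 ∧ (P * D * (1 - P)).rank = n + 1 := by
  have hD : (realModel n).map Complex.ofRealHom =
      fromBlocks ((shiftBlock n).map Complex.ofRealHom) (diagonal fun i => (upperWeight n i : ℂ))
        (diagonal fun i => (lowerWeight n i : ℂ)) ((shiftBlock n)ᵀ.map Complex.ofRealHom) := by
    rw [realModel, fromBlocks_map, diagonal_map (map_zero _), diagonal_map (map_zero _)]
    rfl
  refine ⟨(realModel n).map Complex.ofRealHom, fromBlocks 1 0 0 0,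
    map_ofReal_mul_conjTranspose_comm (realModel_mul_transpose_comm n),
    by simp [fromBlocks_multiply], by simp [fromBlocks_conjTranspose], ?_, ?_, ?_⟩
  · rw [← diagonal_one, rank_fromBlocks_diagonal_zero]
    simp
  · rw [hD, one_sub_fromBlocks_one_zero_mul_fromBlocks_mul,
      rank_fromBlocks_zero_zero_diagonal_zero]
    refine (Fintype.card_congr (Equiv.subtypeEquivRight fun i => ?_)).trans
      (Fintype.card_subtype_eq 0)
    rw [ne_eq, Complex.ofReal_eq_zero, ← ne_eq, lowerWeight_ne_zero_iff, Fin.val_eq_zero_iff]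
  · rw [hD, fromBlocks_one_zero_mul_fromBlocks_mul_one_sub,
      rank_fromBlocks_zero_diagonal_zero_zero]
    simp [(upperWeight_pos n _).ne']

end NormalCorners

open NormalCorners in
theorem exists_normal_incompatible_corners (m : ℕ) (hm : 1 ≤ m) :
    ∃ D P : Matrix (Fin (2 * m)) (Fin (2 * m)) ℂ,
      D * Dᴴ = Dᴴ * D ∧ P * P = P ∧ Pᴴ = P ∧ P.rank = m ∧
        ((1 - P) * D * P).rank = 1 ∧ (P * D * (1 - P)).rank = m := by
  obtain ⟨n, rfl⟩ : ∃ n, m = n + 1 := ⟨m - 1, by omega⟩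
  obtain ⟨D, P, hD, hPP, hPh, hP, hL, hR⟩ := exists_normal_incompatible_corners_sum n
  let f := reindexAlgEquiv ℂ ℂ (finSumFinEquiv.trans (finCongr (two_mul (n + 1)).symm))
  have hf (X) : (f X)ᴴ = f Xᴴ := rfl
  have hrank (X) : (f X).rank = X.rank := rank_reindex _ _ X
  refine ⟨f D, f P, ?_, ?_, ?_, ?_, ?_, ?_⟩
  · rw [hf, ← map_mul, ← map_mul, hD]
  · rw [← map_mul, hPP]
  · rw [hf, hPh]
  · rw [hrank, hP]
  · rw [← map_one f, ← map_sub, ← map_mul, ← map_mul, hrank, hL]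
  · rw [← map_one f, ← map_sub, ← map_mul, ← map_mul, hrank, hR]
end

section
/- Let m ≥ 3, let D ∈ M_{2m}(ℂ), and let P be an orthogonal projection with rank((I−P)DP) = 1 and rank(PD(I−P)) = m. If Y ∈ M_{2m}(ℂ) has the common rank property (rank((I−Q)YQ) = rank(QY(I−Q)) for every orthogonal projection Q), then rank(D − Y) ≥ ⌊(m−1)/2⌋. -/
open Matrix

lemma aux_rank_add_le {k : ℕ} (A B : Matrix (Fin k) (Fin k) ℂ) :
    (A + B).rank ≤ A.rank + B.rank := by
  rw [Matrix.rank, Matrix.rank, Matrix.rank, Matrix.mulVecLin_add]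
  refine le_trans (Submodule.finrank_mono ?_)
    (Submodule.finrank_add_le_finrank_add_finrank _ _)
  rintro x ⟨v, rfl⟩
  exact Submodule.add_mem_sup ⟨v, rfl⟩ ⟨v, rfl⟩

lemma aux_rank_neg {k : ℕ} (A : Matrix (Fin k) (Fin k) ℂ) :
    (-A).rank = A.rank := by
  have : (-A).mulVecLin = -A.mulVecLin := by
    ext v i; simp [Matrix.mulVecLin_apply, Matrix.neg_mulVec]
  rw [Matrix.rank, Matrix.rank, this, LinearMap.range_neg]

/- A normal-like matrix D with highly incompatible corners is far, in the rank
metric, from every matrix Y with the common rank property (CR). -/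
theorem rank_dist_to_CR_matrices (m : ℕ) (hm : 3 ≤ m)
    (D P : Matrix (Fin (2 * m)) (Fin (2 * m)) ℂ)
    (hP1 : P * P = P) (hP2 : Pᴴ = P)
    (h3 : ((1 - P) * D * P).rank = 1) (h2 : (P * D * (1 - P)).rank = m)
    (Y : Matrix (Fin (2 * m)) (Fin (2 * m)) ℂ)
    (hY : ∀ Q : Matrix (Fin (2 * m)) (Fin (2 * m)) ℂ, Q * Q = Q → Qᴴ = Q →
      ((1 - Q) * Y * Q).rank = (Q * Y * (1 - Q)).rank) :
    (m - 1) / 2 ≤ (D - Y).rank := by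
  have hYP := hY P hP1 hP2
  set R := D - Y with hR
  have hr1 : (P * R * (1 - P)).rank ≤ R.rank :=
    le_trans (Matrix.rank_mul_le_left _ _) (Matrix.rank_mul_le_right _ _)
  have hr2 : ((1 - P) * R * P).rank ≤ R.rank :=
    le_trans (Matrix.rank_mul_le_left _ _) (Matrix.rank_mul_le_right _ _)
  have e1 : P * D * (1 - P) = P * Y * (1 - P) + P * R * (1 - P) := by
    rw [hR]; noncomm_ring
  have e2 : (1 - P) * Y * P = (1 - P) * D * P + -((1 - P) * R * P) := by
    rw [hR]; noncomm_ring
  have hA : m ≤ (P * Y * (1 - P)).rank + R.rank := by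
    calc m = (P * D * (1 - P)).rank := h2.symm
    _ = (P * Y * (1 - P) + P * R * (1 - P)).rank := by rw [e1]
    _ ≤ (P * Y * (1 - P)).rank + (P * R * (1 - P)).rank := aux_rank_add_le _ _
    _ ≤ (P * Y * (1 - P)).rank + R.rank := by omega
  have hB : ((1 - P) * Y * P).rank ≤ 1 + R.rank := by
    calc ((1 - P) * Y * P).rank
        = ((1 - P) * D * P + -((1 - P) * R * P)).rank := by rw [e2]
    _ ≤ ((1 - P) * D * P).rank + (-((1 - P) * R * P)).rank := aux_rank_add_le _ _
    _ = 1 + ((1 - P) * R * P).rank := by rw [h3, aux_rank_neg]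
    _ ≤ 1 + R.rank := by omega
  omega
end

section
/- Let H be a separable infinite-dimensional Hilbert space with orthonormal basis {e_n}_{n∈ℤ}, U the bilateral shift (Ue_n = e_{n−1}), A = U + 2U*, and let M, N be the diagonal operators M e_n = α_n e_n, N e_n = β_n e_n with α_n = (1 + 4^{−n})^{−1/2} and β_n = 2^{−n}(1 + 4^{−n})^{−1/2}. Then M, N are commuting positive contractions with M² + N² = I, and N A M − M A* N = 0. -/
/-!
`M` and `N` are diagonal in `e` with weights `α n = 1 / √(1 + a n ^ 2)` and
`β n = a n / √(1 + a n ^ 2)`, where `a n = 2⁻ⁿ`, so `α ^ 2 + β ^ 2 = 1`. A diagonal operator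
with real weights `c` is self-adjoint and, by Parseval, `re ⟪x, D x⟫ = ∑ c n * ‖⟪e n, x⟫‖ ^ 2`;
this gives positivity for `c ≥ 0` and, applied to `D * D`, the bound `‖D‖ ≤ sup |c n|`. Applied
to `e n`, both `N A M` and `M A* N` are combinations of `e (n - 1)` and `e (n + 1)`, and their
coefficients agree because `a (n - 1) = 2 * a n`.
-/

open ContinuousLinearMap

namespace HilbertBasis

variable {ι 𝕜 H : Type*} [RCLike 𝕜] [NormedAddCommGroup H] [InnerProductSpace 𝕜 H]
  (e : HilbertBasis ι 𝕜 H)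

local notation "⟪" x ", " y "⟫" => inner 𝕜 x y

theorem eq_of_forall_inner_eq {x y : H} (h : ∀ i, ⟪e i, x⟫ = ⟪e i, y⟫) : x = y :=
  e.repr.injective <| lp.ext <| funext fun i => by
    simpa only [e.repr_apply_apply] using h i

theorem continuousLinearMap_ext {F : Type*} [NormedAddCommGroup F] [NormedSpace 𝕜 F]
    {T S : H →L[𝕜] F} (h : ∀ i, T (e i) = S (e i)) : T = S :=
  ext_on (Submodule.dense_iff_topologicalClosure_eq_top.mpr e.dense_span) <| by
    rintro _ ⟨i, rfl⟩
    exact h i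

theorem inner_eq_ite [DecidableEq ι] (i j : ι) : ⟪e i, e j⟫ = if i = j then 1 else 0 :=
  orthonormal_iff_ite.mp e.orthonormal i j

theorem adjoint_apply_of_apply_eq_equiv [CompleteSpace H] {U : H →L[𝕜] H} (σ : ι ≃ ι)
    (hU : ∀ i, U (e i) = e (σ i)) (i : ι) : adjoint U (e i) = e (σ.symm i) := by
  classical
  refine e.eq_of_forall_inner_eq fun j => ?_
  rw [adjoint_inner_right, hU, e.inner_eq_ite, e.inner_eq_ite, σ.eq_symm_apply]

def IsDiagonal (D : H →L[𝕜] H) (c : ι → ℝ) : Prop :=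
  ∀ i, D (e i) = (c i : 𝕜) • e i

variable {e} {D D' : H →L[𝕜] H} {c c' : ι → ℝ}

theorem isDiagonal_one : e.IsDiagonal 1 1 := fun i => by
  rw [one_apply_eq_self, Pi.one_apply, RCLike.ofReal_one, one_smul]

theorem IsDiagonal.mul (hD : e.IsDiagonal D c) (hD' : e.IsDiagonal D' c') :
    e.IsDiagonal (D * D') (c * c') := fun i => by
  rw [mul_apply_eq_comp, hD' i, map_smul, hD i, smul_smul, Pi.mul_apply, RCLike.ofReal_mul,
    _root_.mul_comm]

theorem IsDiagonal.add (hD : e.IsDiagonal D c) (hD' : e.IsDiagonal D' c') :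
    e.IsDiagonal (D + D') (c + c') := fun i => by
  rw [add_apply, hD i, hD' i, Pi.add_apply, RCLike.ofReal_add, add_smul]

theorem IsDiagonal.unique (hD : e.IsDiagonal D c) (hD' : e.IsDiagonal D' c) : D = D' :=
  e.continuousLinearMap_ext fun i => (hD i).trans (hD' i).symm

theorem IsDiagonal.mul_comm (hD : e.IsDiagonal D c) (hD' : e.IsDiagonal D' c') :
    D * D' = D' * D :=
  (hD.mul hD').unique (_root_.mul_comm c c' ▸ hD'.mul hD)

variable [CompleteSpace H]

theorem IsDiagonal.adjoint_eq (hD : e.IsDiagonal D c) : adjoint D = D := by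
  classical
  refine e.continuousLinearMap_ext fun i => e.eq_of_forall_inner_eq fun j => ?_
  rw [adjoint_inner_right, hD, hD, inner_smul_left, inner_smul_right, RCLike.conj_ofReal,
    e.inner_eq_ite]
  split_ifs with h
  · rw [h]
  · rw [mul_zero, mul_zero]

theorem IsDiagonal.inner_apply (hD : e.IsDiagonal D c) (i : ι) (x : H) :
    ⟪e i, D x⟫ = c i * ⟪e i, x⟫ := by
  rw [← adjoint_inner_left, hD.adjoint_eq, hD, inner_smul_left, RCLike.conj_ofReal]

theorem IsDiagonal.hasSum_re_inner_apply (hD : e.IsDiagonal D c) (x : H) :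
    HasSum (fun i => c i * ‖⟪e i, x⟫‖ ^ 2) (RCLike.re ⟪x, D x⟫) := by
  convert RCLike.hasSum_re _ (e.hasSum_inner_mul_inner x (D x)) using 2 with i
  rw [hD.inner_apply, ← inner_conj_symm x (e i), mul_left_comm, RCLike.conj_mul]
  norm_cast

theorem IsDiagonal.isPositive (hD : e.IsDiagonal D c) (hc : 0 ≤ c) : D.IsPositive := by
  refine isPositive_def'.mpr ⟨isSelfAdjoint_iff'.mpr hD.adjoint_eq, fun x => ?_⟩
  rw [reApplyInnerSelf, ← inner_conj_symm, RCLike.conj_re]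
  exact (hD.hasSum_re_inner_apply x).nonneg fun i => mul_nonneg (hc i) (sq_nonneg _)

theorem IsDiagonal.norm_le (hD : e.IsDiagonal D c) {C : ℝ} (hC : 0 ≤ C) (hc : ∀ i, |c i| ≤ C) :
    ‖D‖ ≤ C := by
  refine opNorm_le_bound D hC fun x => ?_
  have hDx := (hD.mul hD).hasSum_re_inner_apply x
  rw [mul_apply_eq_comp, ← adjoint_inner_left, hD.adjoint_eq, inner_self_eq_norm_sq] at hDx
  have hx := (isDiagonal_one (e := e)).hasSum_re_inner_apply x
  rw [one_apply_eq_self, inner_self_eq_norm_sq] at hx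
  have hsq : ‖D x‖ ^ 2 ≤ (C * ‖x‖) ^ 2 := by
    rw [mul_pow]
    refine hasSum_le (fun i => ?_) hDx (hx.mul_left (C ^ 2))
    rw [Pi.mul_apply, Pi.one_apply, one_mul, ← sq, ← sq_abs]
    exact mul_le_mul_of_nonneg_right (pow_le_pow_left₀ (abs_nonneg _) (hc i) 2) (sq_nonneg _)
  exact (pow_le_pow_iff_left₀ (norm_nonneg _) (by positivity) two_ne_zero).mp hsq

theorem IsDiagonal.mul_mul_eq_mul_adjoint_mul_of_shift {e : HilbertBasis ℤ 𝕜 H}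
    {U M N : H →L[𝕜] H} {α β : ℤ → ℝ} (hU : ∀ n, U (e n) = e (n - 1)) (hM : e.IsDiagonal M α)
    (hN : e.IsDiagonal N β) (t : ℝ) (hαβ : ∀ n, α n * β (n - 1) = t * (β n * α (n - 1))) :
    N * (U + (t : 𝕜) • adjoint U) * M = M * adjoint (U + (t : 𝕜) • adjoint U) * N := by
  have hU' (n : ℤ) : adjoint U (e n) = e (n + 1) := by
    simpa using e.adjoint_apply_of_apply_eq_equiv (Equiv.subRight 1) hU n
  have hA : adjoint (U + (t : 𝕜) • adjoint U) = adjoint U + (t : 𝕜) • U := by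
    rw [map_add, map_smulₛₗ, adjoint_adjoint, RCLike.conj_ofReal]
  refine e.continuousLinearMap_ext fun n => ?_
  have h₁ : (α n * β (n - 1) : 𝕜) = t * (β n * α (n - 1)) := by exact_mod_cast hαβ n
  have h₂ : (α (n + 1) * β n : 𝕜) = t * (β (n + 1) * α n) := by
    exact_mod_cast add_sub_cancel_right n 1 ▸ hαβ (n + 1)
  simp only [hA, mul_apply_eq_comp, add_apply, smul_apply, map_add, map_smul, hU, hU', hM _,
    hN _]
  linear_combination (norm := module) h₁ • e (n - 1) - h₂ • e (n + 1)

end HilbertBasis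

theorem one_div_sqrt_sq_add_div_sqrt_sq (a : ℝ) :
    (1 / √(1 + a ^ 2)) ^ 2 + (a / √(1 + a ^ 2)) ^ 2 = 1 := by
  rw [div_pow, div_pow, Real.sq_sqrt (by positivity), one_pow, ← add_div, div_self (by positivity)]

theorem diagonal_intertwiner_vanishes (H : Type*) [NormedAddCommGroup H]
    [InnerProductSpace ℂ H] [CompleteSpace H]
    (e : HilbertBasis ℤ ℂ H) (U M N : H →L[ℂ] H)
    (hU : ∀ n : ℤ, U (e n) = e (n - 1))
    (hM : ∀ n : ℤ, M (e n) = ((1 / Real.sqrt (1 + (4 : ℝ) ^ (-n)) : ℝ) : ℂ) • e n)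
    (hN : ∀ n : ℤ, N (e n) =
      (((2 : ℝ) ^ (-n) / Real.sqrt (1 + (4 : ℝ) ^ (-n)) : ℝ) : ℂ) • e n) :
    M.IsPositive ∧ N.IsPositive ∧ ‖M‖ ≤ 1 ∧ ‖N‖ ≤ 1 ∧ M * N = N * M ∧
      M ^ 2 + N ^ 2 = 1 ∧
      N * (U + 2 • adjoint U) * M - M * adjoint (U + 2 • adjoint U) * N = 0 := by
  have h4 (n : ℤ) : (4 : ℝ) ^ (-n) = (2 ^ (-n)) ^ 2 := by
    rw [sq, ← mul_zpow]; norm_num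
  simp only [h4] at hM hN
  set α : ℤ → ℝ := fun n => 1 / √(1 + ((2 : ℝ) ^ (-n)) ^ 2)
  set β : ℤ → ℝ := fun n => 2 ^ (-n) / √(1 + ((2 : ℝ) ^ (-n)) ^ 2)
  have hM' : e.IsDiagonal M α := hM
  have hN' : e.IsDiagonal N β := hN
  have hsq (n : ℤ) : α n ^ 2 + β n ^ 2 = 1 := one_div_sqrt_sq_add_div_sqrt_sq _
  have hαβ (n : ℤ) : α n * β (n - 1) = 2 * (β n * α (n - 1)) := by
    have h2 : (2 : ℝ) ^ (-(n - 1)) = 2 * 2 ^ (-n) := by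
      rw [show -(n - 1) = 1 + -n by ring, zpow_add₀ two_ne_zero, zpow_one]
    simp only [α, β, h2]
    ring
  refine ⟨hM'.isPositive fun n => by positivity, hN'.isPositive fun n => by positivity,
    hM'.norm_le zero_le_one fun n => ?_, hN'.norm_le zero_le_one fun n => ?_,
    hM'.mul_comm hN', ?_, ?_⟩
  · exact (sq_le_one_iff_abs_le_one _).mp (by linarith [hsq n, sq_nonneg (β n)])
  · exact (sq_le_one_iff_abs_le_one _).mp (by linarith [hsq n, sq_nonneg (α n)])
  · have hone : α * α + β * β = 1 :=
      funext fun n => by simpa only [Pi.add_apply, Pi.mul_apply, Pi.one_apply, sq] using hsq n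
    rw [sq, sq]
    exact ((hM'.mul hM').add (hN'.mul hN')).unique (hone ▸ HilbertBasis.isDiagonal_one)
  · rw [sub_eq_zero, ← ofNat_smul_eq_nsmul ℂ, ← Complex.ofReal_ofNat]
    exact hM'.mul_mul_eq_mul_adjoint_mul_of_shift hU hN' 2 hαβ
end
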